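/- The natural inclusion A_k^n ↪ A_k^{n+2k} is null-homotopic: there exists a continuous map H : [0,1] × A_k^n → A_k^{n+2k} such that H(0,·) is the inclusion sending (a₁,a₂,b,c,x) to (a₁,a₂,b′,c′,x), where b′ is b with 2k extra columns of zeroes adjoined on the left and c′ is c with 2k extra rows of zeroes adjoined on the top, and H(1,·) is a constant map. -/
import Mathlib


open Matrix

/-- A configuration `(a₁, a₂, b, c, x)` of type `(k, n)` is *integrable* if
`a₁·x·a₂ − a₂·x·a₁ + b·c = 0`. -/
def Integrable (k n : ℕ) (a₁ a₂ : Matrix (Fin k) (Fin k) ℂ)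
    (b : Matrix (Fin k) (Fin n) ℂ) (c : Matrix (Fin n) (Fin k) ℂ)
    (x : Matrix (Fin k) (Fin k) ℂ) : Prop :=
  a₁ * x * a₂ - a₂ * x * a₁ + b * c = 0

/-- A configuration `(a₁, a₂, b, c, x)` of type `(k, n)` is *non-degenerate* if for all
`(λ₁,λ₂), (μ₁,μ₂) ∈ ℂ²` with `λ₁μ₁ + λ₂μ₂ = 0` and `(μ₁,μ₂) ≠ (0,0)`, there is no nonzero
`v` with `x a₁ v = λ₁ v`, `x a₂ v = λ₂ v`, `(μ₁a₁ + μ₂a₂) v = 0`, `c v = 0`, and no nonzero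
`w` with `x* a₁* w = λ₁ w`, `x* a₂* w = λ₂ w`, `(μ₁a₁* + μ₂a₂*) w = 0`, `b* w = 0`. -/
def Nondegenerate (k n : ℕ) (a₁ a₂ : Matrix (Fin k) (Fin k) ℂ)
    (b : Matrix (Fin k) (Fin n) ℂ) (c : Matrix (Fin n) (Fin k) ℂ)
    (x : Matrix (Fin k) (Fin k) ℂ) : Prop :=
  ∀ lam₁ lam₂ mu₁ mu₂ : ℂ, lam₁ * mu₁ + lam₂ * mu₂ = 0 → (mu₁, mu₂) ≠ (0, 0) →
    (¬ ∃ v : Fin k → ℂ, v ≠ 0 ∧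
        (x * a₁).mulVec v = lam₁ • v ∧ (x * a₂).mulVec v = lam₂ • v ∧
        (mu₁ • a₁ + mu₂ • a₂).mulVec v = 0 ∧ c.mulVec v = 0) ∧
    (¬ ∃ w : Fin k → ℂ, w ≠ 0 ∧
        (xᴴ * a₁ᴴ).mulVec w = lam₁ • w ∧ (xᴴ * a₂ᴴ).mulVec w = lam₂ • w ∧
        (mu₁ • a₁ᴴ + mu₂ • a₂ᴴ).mulVec w = 0 ∧ bᴴ.mulVec w = 0)

/-- The set `A_k^n` of integrable non-degenerate configurations `(a₁,a₂,b,c,x)` of type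
`(k,n)`, as a subset of the product of the corresponding complex matrix spaces. -/
def Akn (k n : ℕ) :
    Set (Matrix (Fin k) (Fin k) ℂ × Matrix (Fin k) (Fin k) ℂ ×
      Matrix (Fin k) (Fin n) ℂ × Matrix (Fin n) (Fin k) ℂ × Matrix (Fin k) (Fin k) ℂ) :=
  {p | Integrable k n p.1 p.2.1 p.2.2.1 p.2.2.2.1 p.2.2.2.2 ∧
       Nondegenerate k n p.1 p.2.1 p.2.2.1 p.2.2.2.1 p.2.2.2.2}

/-- `b′`: the `k × (n+2k)` matrix obtained from the `k × n` matrix `b` by adjoining `2k`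
extra columns of zeroes on the left. -/
def padCols (k n : ℕ) (b : Matrix (Fin k) (Fin n) ℂ) : Matrix (Fin k) (Fin (n + 2 * k)) ℂ :=
  Matrix.of fun i j =>
    if h : (j : ℕ) < 2 * k then 0 else b i ⟨(j : ℕ) - 2 * k, by omega⟩

/-- `c′`: the `(n+2k) × k` matrix obtained from the `n × k` matrix `c` by adjoining `2k`
extra rows of zeroes on the top. -/
def padRows (k n : ℕ) (c : Matrix (Fin n) (Fin k) ℂ) : Matrix (Fin (n + 2 * k)) (Fin k) ℂ :=
  Matrix.of fun i j =>
    if h : (i : ℕ) < 2 * k then 0 else c ⟨(i : ℕ) - 2 * k, by omega⟩ j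

section Homotopy

/-- The deformed `b`: a `t`-scaled identity block in the first `k` padding columns,
and `b` scaled by `1 - t` in the last `n` columns. -/
def Bmat (k n : ℕ) (t : ℝ) (b : Matrix (Fin k) (Fin n) ℂ) :
    Matrix (Fin k) (Fin (n + 2 * k)) ℂ :=
  Matrix.of fun i j =>
    if _h : (j : ℕ) < 2 * k then (if (j : ℕ) = (i : ℕ) then (t : ℂ) else 0)
    else ((1 - t : ℝ) : ℂ) * b i ⟨(j : ℕ) - 2 * k, by omega⟩

/-- The deformed `c`: a `t`-scaled identity block in the second `k` padding rows,
and `c` scaled by `(1 - t)^2` in the last `n` rows. -/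
def Cmat (k n : ℕ) (t : ℝ) (c : Matrix (Fin n) (Fin k) ℂ) :
    Matrix (Fin (n + 2 * k)) (Fin k) ℂ :=
  Matrix.of fun i j =>
    if _h : (i : ℕ) < 2 * k then (if (i : ℕ) = k + (j : ℕ) then (t : ℂ) else 0)
    else (((1 - t) ^ 2 : ℝ) : ℂ) * c ⟨(i : ℕ) - 2 * k, by omega⟩ j

lemma Bmat_zero (k n : ℕ) (b : Matrix (Fin k) (Fin n) ℂ) :
    Bmat k n 0 b = padCols k n b := by
  ext i j
  simp only [Bmat, padCols, Matrix.of_apply]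
  split_ifs <;> simp

lemma Cmat_zero (k n : ℕ) (c : Matrix (Fin n) (Fin k) ℂ) :
    Cmat k n 0 c = padRows k n c := by
  ext i j
  simp only [Cmat, padRows, Matrix.of_apply]
  split_ifs <;> simp

lemma Bmat_one (k n : ℕ) (b : Matrix (Fin k) (Fin n) ℂ) :
    Bmat k n 1 b = Bmat k n 1 0 := by
  ext i j
  simp only [Bmat, Matrix.of_apply]
  split_ifs <;> simp

lemma Cmat_one (k n : ℕ) (c : Matrix (Fin n) (Fin k) ℂ) :
    Cmat k n 1 c = Cmat k n 1 0 := by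
  ext i j
  simp only [Cmat, Matrix.of_apply]
  split_ifs <;> simp

lemma Bmat_mul_Cmat (k n : ℕ) (t : ℝ) (b : Matrix (Fin k) (Fin n) ℂ)
    (c : Matrix (Fin n) (Fin k) ℂ) :
    Bmat k n t b * Cmat k n t c = (((1 - t) ^ 3 : ℝ) : ℂ) • (b * c) := by
  classical
  ext i j
  rw [Matrix.mul_apply, Matrix.smul_apply, Matrix.mul_apply, smul_eq_mul, Finset.mul_sum]
  have key : ∀ m : Fin (n + 2 * k),
      Bmat k n t b i m * Cmat k n t c m j =
        if h : (m : ℕ) < 2 * k then 0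
        else (((1 - t) ^ 3 : ℝ) : ℂ) *
          (b i ⟨(m : ℕ) - 2 * k, by omega⟩ * c ⟨(m : ℕ) - 2 * k, by omega⟩ j) := by
    intro m
    by_cases h : (m : ℕ) < 2 * k
    · rw [dif_pos h]
      simp only [Bmat, Cmat, Matrix.of_apply, dif_pos h]
      rcases eq_or_ne (m : ℕ) (i : ℕ) with h1 | h1
      · rw [if_neg (show ¬ (m : ℕ) = k + (j : ℕ) by have := i.isLt; omega), mul_zero]
      · rw [if_neg h1, zero_mul]
    · rw [dif_neg h]
      simp only [Bmat, Cmat, Matrix.of_apply, dif_neg h]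
      push_cast
      ring
  simp only [key]
  let e : Fin n → Fin (n + 2 * k) := fun j' => ⟨2 * k + (j' : ℕ), by omega⟩
  have he : Function.Injective e := by
    intro a b hab
    have : 2 * k + (a : ℕ) = 2 * k + (b : ℕ) := congrArg Fin.val hab
    exact Fin.ext (by omega)
  have h1 : (∑ m : Fin (n + 2 * k),
      if h : (m : ℕ) < 2 * k then 0
      else (((1 - t) ^ 3 : ℝ) : ℂ) *
        (b i ⟨(m : ℕ) - 2 * k, by omega⟩ * c ⟨(m : ℕ) - 2 * k, by omega⟩ j)) =
      ∑ m ∈ Finset.univ.image e,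
      (if h : (m : ℕ) < 2 * k then 0
      else (((1 - t) ^ 3 : ℝ) : ℂ) *
        (b i ⟨(m : ℕ) - 2 * k, by omega⟩ * c ⟨(m : ℕ) - 2 * k, by omega⟩ j)) := by
    refine (Finset.sum_subset (Finset.subset_univ _) ?_).symm
    intro m _ hm
    have hlt : (m : ℕ) < 2 * k := by
      by_contra hc
      exact hm (Finset.mem_image.2 ⟨⟨(m : ℕ) - 2 * k, by omega⟩, Finset.mem_univ _,
        Fin.ext (by show 2 * k + ((m : ℕ) - 2 * k) = (m : ℕ); omega)⟩)
    rw [dif_pos hlt]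
  rw [h1, Finset.sum_image (fun a _ b _ hab => he hab)]
  refine Finset.sum_congr rfl fun j' _ => ?_
  rw [dif_neg (show ¬ ((e j' : ℕ) < 2 * k) by
    show ¬ (2 * k + (j' : ℕ) < 2 * k); omega)]
  congr 2
  · exact congrArg (b i) (Fin.ext (by show 2 * k + (j' : ℕ) - 2 * k = (j' : ℕ); omega))
  · exact congrArg (fun z => c z j)
      (Fin.ext (by show 2 * k + (j' : ℕ) - 2 * k = (j' : ℕ); omega))

/-- The configuration map used in the contraction. -/
def Fmap (k n : ℕ) (t : ℝ)
    (p : Matrix (Fin k) (Fin k) ℂ × Matrix (Fin k) (Fin k) ℂ ×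
      Matrix (Fin k) (Fin n) ℂ × Matrix (Fin n) (Fin k) ℂ × Matrix (Fin k) (Fin k) ℂ) :
    Matrix (Fin k) (Fin k) ℂ × Matrix (Fin k) (Fin k) ℂ ×
      Matrix (Fin k) (Fin (n + 2 * k)) ℂ × Matrix (Fin (n + 2 * k)) (Fin k) ℂ ×
      Matrix (Fin k) (Fin k) ℂ :=
  (((1 - t : ℝ) : ℂ) • p.1, ((1 - t : ℝ) : ℂ) • p.2.1, Bmat k n t p.2.2.1,
    Cmat k n t p.2.2.2.1, ((1 - t : ℝ) : ℂ) • p.2.2.2.2)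

lemma integrable_Fmap (k n : ℕ) (t : ℝ) {a₁ a₂ x : Matrix (Fin k) (Fin k) ℂ}
    {b : Matrix (Fin k) (Fin n) ℂ} {c : Matrix (Fin n) (Fin k) ℂ}
    (h : Integrable k n a₁ a₂ b c x) :
    Integrable k (n + 2 * k) (((1 - t : ℝ) : ℂ) • a₁) (((1 - t : ℝ) : ℂ) • a₂)
      (Bmat k n t b) (Cmat k n t c) (((1 - t : ℝ) : ℂ) • x) := by
  unfold Integrable at h ⊢
  rw [Bmat_mul_Cmat]
  have hs : (((1 - t) ^ 3 : ℝ) : ℂ) = ((1 - t : ℝ) : ℂ) ^ 3 := by push_cast; ring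
  rw [hs]
  set s : ℂ := ((1 - t : ℝ) : ℂ)
  have e1 : (s • a₁) * (s • x) * (s • a₂) = s ^ 3 • (a₁ * x * a₂) := by
    rw [Matrix.smul_mul, Matrix.mul_smul, Matrix.smul_mul, Matrix.mul_smul,
      Matrix.smul_mul, smul_smul, smul_smul]
    ring_nf
  have e2 : (s • a₂) * (s • x) * (s • a₁) = s ^ 3 • (a₂ * x * a₁) := by
    rw [Matrix.smul_mul, Matrix.mul_smul, Matrix.smul_mul, Matrix.mul_smul,
      Matrix.smul_mul, smul_smul, smul_smul]
    ring_nf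
  rw [e1, e2, ← smul_sub, ← smul_add, h, smul_zero]

lemma nondeg_of_ne (k n : ℕ) (t : ℝ) (ht : t ≠ 0) (a₁ a₂ x : Matrix (Fin k) (Fin k) ℂ)
    (b : Matrix (Fin k) (Fin n) ℂ) (c : Matrix (Fin n) (Fin k) ℂ) :
    Nondegenerate k (n + 2 * k) a₁ a₂ (Bmat k n t b) (Cmat k n t c) x := by
  have htc : (t : ℂ) ≠ 0 := by exact_mod_cast ht
  intro l1 l2 m1 m2 _ _
  constructor
  · rintro ⟨v, hv, -, -, -, hcv⟩
    apply hv
    funext j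
    have hrow := congrFun hcv ⟨k + (j : ℕ), by have := j.isLt; omega⟩
    simp only [Matrix.mulVec, dotProduct, Pi.zero_apply] at hrow
    have hterm : ∀ j' : Fin k,
        Cmat k n t c ⟨k + (j : ℕ), by have := j.isLt; omega⟩ j' * v j' =
          if j' = j then (t : ℂ) * v j else 0 := by
      intro j'
      simp only [Cmat, Matrix.of_apply]
      rw [dif_pos (show k + (j : ℕ) < 2 * k by have := j.isLt; omega)]
      rcases eq_or_ne j' j with h | h
      · subst h; simp
      · rw [if_neg (fun hc => h (Fin.ext (by omega))), if_neg h, zero_mul]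
    rw [Finset.sum_congr rfl fun j' _ => hterm j'] at hrow
    simp only [Finset.sum_ite_eq', Finset.mem_univ, if_true] at hrow
    have := mul_eq_zero.1 hrow
    tauto
  · rintro ⟨w, hw, -, -, -, hbw⟩
    apply hw
    funext j
    have hrow := congrFun hbw ⟨(j : ℕ), by have := j.isLt; omega⟩
    simp only [Matrix.mulVec, dotProduct, Pi.zero_apply, Matrix.conjTranspose_apply] at hrow
    have hterm : ∀ i : Fin k,
        star (Bmat k n t b i ⟨(j : ℕ), by have := j.isLt; omega⟩) * w i =
          if i = j then star (t : ℂ) * w j else 0 := by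
      intro i
      simp only [Bmat, Matrix.of_apply]
      rw [dif_pos (show (j : ℕ) < 2 * k by have := j.isLt; omega)]
      rcases eq_or_ne i j with h | h
      · subst h; simp
      · rw [if_neg (fun hc => h (Fin.ext (by omega))), star_zero, zero_mul, if_neg h]
    rw [Finset.sum_congr rfl fun i _ => hterm i] at hrow
    simp only [Finset.sum_ite_eq', Finset.mem_univ, if_true] at hrow
    have := mul_eq_zero.1 hrow
    have hst : star (t : ℂ) ≠ 0 := by simpa using htc
    tauto

lemma nondeg_pad (k n : ℕ) {a₁ a₂ x : Matrix (Fin k) (Fin k) ℂ}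
    {b : Matrix (Fin k) (Fin n) ℂ} {c : Matrix (Fin n) (Fin k) ℂ}
    (h : Nondegenerate k n a₁ a₂ b c x) :
    Nondegenerate k (n + 2 * k) a₁ a₂ (padCols k n b) (padRows k n c) x := by
  intro l1 l2 m1 m2 hl hm
  obtain ⟨h1, h2⟩ := h l1 l2 m1 m2 hl hm
  constructor
  · rintro ⟨v, hv, e1, e2, e3, e4⟩
    refine h1 ⟨v, hv, e1, e2, e3, ?_⟩
    funext i'
    have := congrFun e4 ⟨2 * k + (i' : ℕ), by have := i'.isLt; omega⟩
    simp only [Matrix.mulVec, dotProduct, padRows, Matrix.of_apply, Pi.zero_apply] at this ⊢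
    rw [← this]
    refine Finset.sum_congr rfl fun j _ => ?_
    rw [dif_neg (by omega)]
    refine congrArg (fun z => c z j * v j) (Fin.ext ?_)
    show (i' : ℕ) = 2 * k + (i' : ℕ) - 2 * k
    omega
  · rintro ⟨w, hw, e1, e2, e3, e4⟩
    refine h2 ⟨w, hw, e1, e2, e3, ?_⟩
    funext j'
    have := congrFun e4 ⟨2 * k + (j' : ℕ), by have := j'.isLt; omega⟩
    simp only [Matrix.mulVec, dotProduct, padCols, Matrix.of_apply, Pi.zero_apply,
      Matrix.conjTranspose_apply] at this ⊢
    rw [← this]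
    refine Finset.sum_congr rfl fun i _ => ?_
    rw [dif_neg (by omega)]
    refine congrArg (fun z => star (b i z) * w i) (Fin.ext ?_)
    show (j' : ℕ) = 2 * k + (j' : ℕ) - 2 * k
    omega

lemma Fmap_mem (k n : ℕ) (t : ℝ)
    {p : Matrix (Fin k) (Fin k) ℂ × Matrix (Fin k) (Fin k) ℂ ×
      Matrix (Fin k) (Fin n) ℂ × Matrix (Fin n) (Fin k) ℂ × Matrix (Fin k) (Fin k) ℂ}
    (hp : p ∈ Akn k n) : Fmap k n t p ∈ Akn k (n + 2 * k) := by
  obtain ⟨hint, hnd⟩ := hp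
  refine ⟨integrable_Fmap k n t hint, ?_⟩
  rcases eq_or_ne t 0 with rfl | ht
  · show Nondegenerate _ _ (((1 - (0:ℝ) : ℝ) : ℂ) • p.1) _ _ _ _
    simp only [Fmap, sub_zero, Complex.ofReal_one, one_smul, Bmat_zero, Cmat_zero]
    exact nondeg_pad k n hnd
  · exact nondeg_of_ne k n t ht _ _ _ _ _

lemma continuous_Fmap (k n : ℕ) :
    Continuous (fun z : ℝ × (Matrix (Fin k) (Fin k) ℂ × Matrix (Fin k) (Fin k) ℂ ×
      Matrix (Fin k) (Fin n) ℂ × Matrix (Fin n) (Fin k) ℂ × Matrix (Fin k) (Fin k) ℂ) =>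
      Fmap k n z.1 z.2) := by
  have hs : Continuous (fun z : ℝ × (Matrix (Fin k) (Fin k) ℂ × Matrix (Fin k) (Fin k) ℂ ×
      Matrix (Fin k) (Fin n) ℂ × Matrix (Fin n) (Fin k) ℂ × Matrix (Fin k) (Fin k) ℂ) =>
      ((1 - z.1 : ℝ) : ℂ)) :=
    Complex.continuous_ofReal.comp (by fun_prop)
  have hs2 : Continuous (fun z : ℝ × (Matrix (Fin k) (Fin k) ℂ × Matrix (Fin k) (Fin k) ℂ ×
      Matrix (Fin k) (Fin n) ℂ × Matrix (Fin n) (Fin k) ℂ × Matrix (Fin k) (Fin k) ℂ) =>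
      (((1 - z.1) ^ 2 : ℝ) : ℂ)) :=
    Complex.continuous_ofReal.comp (by fun_prop)
  have ht : Continuous (fun z : ℝ × (Matrix (Fin k) (Fin k) ℂ × Matrix (Fin k) (Fin k) ℂ ×
      Matrix (Fin k) (Fin n) ℂ × Matrix (Fin n) (Fin k) ℂ × Matrix (Fin k) (Fin k) ℂ) =>
      ((z.1 : ℝ) : ℂ)) :=
    Complex.continuous_ofReal.comp continuous_fst
  have hb : Continuous (fun z : ℝ × (Matrix (Fin k) (Fin k) ℂ × Matrix (Fin k) (Fin k) ℂ ×
      Matrix (Fin k) (Fin n) ℂ × Matrix (Fin n) (Fin k) ℂ × Matrix (Fin k) (Fin k) ℂ) =>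
      z.2.2.2.1) := by fun_prop
  have hc : Continuous (fun z : ℝ × (Matrix (Fin k) (Fin k) ℂ × Matrix (Fin k) (Fin k) ℂ ×
      Matrix (Fin k) (Fin n) ℂ × Matrix (Fin n) (Fin k) ℂ × Matrix (Fin k) (Fin k) ℂ) =>
      z.2.2.2.2.1) := by fun_prop
  refine Continuous.prodMk (hs.smul (by fun_prop)) ?_
  refine Continuous.prodMk (hs.smul (by fun_prop)) ?_
  refine Continuous.prodMk ?_ ?_
  · apply continuous_matrix
    intro i j
    simp only [Bmat, Matrix.of_apply]
    split_ifs
    · exact ht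
    · exact continuous_const
    · exact hs.mul ((continuous_apply _).comp ((continuous_apply _).comp hb))
  refine Continuous.prodMk ?_ (hs.smul (by fun_prop))
  apply continuous_matrix
  intro i j
  simp only [Cmat, Matrix.of_apply]
  split_ifs
  · exact ht
  · exact continuous_const
  · exact hs2.mul ((continuous_apply _).comp ((continuous_apply _).comp hc))

end Homotopy

/-- The natural inclusion `A_k^n ↪ A_k^{n+2k}` is null-homotopic: there is a continuous map
`H : [0,1] × A_k^n → A_k^{n+2k}` with `H(0,·)` the inclusion
`(a₁,a₂,b,c,x) ↦ (a₁,a₂,b′,c′,x)` (where `b′` adjoins `2k` zero columns on the left of `b`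
and `c′` adjoins `2k` zero rows on the top of `c`) and `H(1,·)` a constant map. -/



theorem inclusion_nullhomotopic (k n : ℕ) :
    ∃ H : Set.Icc (0 : ℝ) 1 × Akn k n → Akn k (n + 2 * k),
      Continuous H ∧
      (∀ p : Akn k n,
        (H (⟨0, Set.left_mem_Icc.mpr zero_le_one⟩, p)).1 =
          (p.1.1, p.1.2.1, padCols k n p.1.2.2.1, padRows k n p.1.2.2.2.1, p.1.2.2.2.2)) ∧
      (∃ q : Akn k (n + 2 * k),
        ∀ p : Akn k n, H (⟨1, Set.right_mem_Icc.mpr zero_le_one⟩, p) = q) := by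
  classical
  refine ⟨fun q => ⟨Fmap k n (q.1 : ℝ) (q.2 : _), Fmap_mem k n _ q.2.2⟩, ?_, ?_, ?_⟩
  · apply Continuous.subtype_mk
    exact (continuous_Fmap k n).comp
      ((continuous_subtype_val.comp continuous_fst).prodMk
        (continuous_subtype_val.comp continuous_snd))
  · intro p
    show Fmap k n 0 _ = _
    simp only [Fmap, sub_zero, Complex.ofReal_one, one_smul, Bmat_zero, Cmat_zero]
  · refine ⟨⟨Fmap k n 1 (0, 0, 0, 0, 0), ?_⟩, ?_⟩
    · refine ⟨?_, nondeg_of_ne k n 1 one_ne_zero _ _ _ _ _⟩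
      show Integrable _ _ _ _ _ _ _
      unfold Integrable Fmap
      simp only
      rw [Bmat_mul_Cmat]
      simp
    · intro p
      apply Subtype.ext
      show Fmap k n 1 _ = Fmap k n 1 _
      simp only [Fmap, sub_self, Complex.ofReal_zero, zero_smul, Bmat_one, Cmat_one]
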